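/- arXiv:math/0006098 — 4 statements merged into one kernel-verified Lean document; each statement's English description precedes it below -/
import Mathlib

section
/- Let K be a compact Lie group with Lie algebra 𝔨 and commutator map p(g,h) = ghg⁻¹h⁻¹. The differential dp at (g,h) (in left trivialization) is surjective onto 𝔨 whenever 𝔨^g ∩ 𝔨^h = {0}, where 𝔨^g denotes the fixed-point set of Ad_g and we assume 𝔨 has trivial center. -/
open scoped RealInnerProductSpace


/-- For a compact Lie group, the differential of the commutator map
`dp(ξ,η) = Ad_{hg}(Ad_{h⁻¹}ξ - ξ + η - Ad_{g⁻¹}η)` is surjective onto `𝔨` whenever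
`𝔨^g ∩ 𝔨^h = 0`.  Here `𝔨` is modeled as a finite-dimensional real inner product space
(the Ad-invariant inner product), `Ad` is an orthogonal representation of the group, and
triviality of the center means that no nonzero vector is fixed by all `Ad k`. -/
theorem stmt8 {K V : Type*} [Group K] [NormedAddCommGroup V] [InnerProductSpace ℝ V]
    [FiniteDimensional ℝ V] (Ad : K →* (V ≃ₗᵢ[ℝ] V))
    (hcenter : ∀ x : V, (∀ k : K, Ad k x = x) → x = 0)
    (g h : K)
    (hfix : ∀ x : V, Ad g x = x → Ad h x = x → x = 0) :
    ∀ ζ : V, ∃ ξ η : V,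
      Ad (h * g) (Ad h⁻¹ ξ - ξ + η - Ad g⁻¹ η) = ζ := by
  intro ζ
  -- cancellation lemma
  have hcancel : ∀ (k : K) (v : V), Ad k (Ad k⁻¹ v) = v := by
    intro k v
    have : (Ad k * Ad k⁻¹) v = Ad (k * k⁻¹) v := by rw [map_mul]
    simpa using this.symm
  set A : V →ₗ[ℝ] V :=
    (Ad h⁻¹).toLinearEquiv.toLinearMap - LinearMap.id with hA
  set B : V →ₗ[ℝ] V :=
    LinearMap.id - (Ad g⁻¹).toLinearEquiv.toLinearMap with hB
  set f : V × V →ₗ[ℝ] V := A.coprod B with hf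
  have horth : (LinearMap.range f)ᗮ = ⊥ := by
    rw [Submodule.eq_bot_iff]
    intro x hx
    rw [Submodule.mem_orthogonal] at hx
    -- key adjoint identities
    have keyh : ∀ ξ : V, ⟪(Ad h⁻¹) ξ, x⟫ = ⟪ξ, Ad h x⟫ := by
      intro ξ
      have := (Ad h).inner_map_map ((Ad h⁻¹) ξ) x
      rw [hcancel h ξ] at this; exact this.symm
    have keyg : ∀ η : V, ⟪(Ad g⁻¹) η, x⟫ = ⟪η, Ad g x⟫ := by
      intro η
      have := (Ad g).inner_map_map ((Ad g⁻¹) η) x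
      rw [hcancel g η] at this; exact this.symm
    have hxh : Ad h x = x := by
      set ξ := Ad h x - x with hξ
      have h0 : ⟪f (ξ, 0), x⟫ = 0 := hx _ ⟨(ξ, 0), rfl⟩
      have hfval : f (ξ, 0) = (Ad h⁻¹) ξ - ξ := by
        simp [hf, hA, hB, LinearMap.coprod_apply]
      rw [hfval, inner_sub_left, keyh, ← inner_sub_right] at h0
      have : ⟪ξ, ξ⟫ = 0 := by rw [hξ]; exact h0
      have : ξ = 0 := inner_self_eq_zero.mp this
      rw [hξ, sub_eq_zero] at this
      exact this
    have hxg : Ad g x = x := by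
      set η := x - Ad g x with hη
      have h0 : ⟪f (0, η), x⟫ = 0 := hx _ ⟨(0, η), rfl⟩
      have hfval : f (0, η) = η - (Ad g⁻¹) η := by
        simp [hf, hA, hB, LinearMap.coprod_apply]
      rw [hfval, inner_sub_left, keyg, ← inner_sub_right] at h0
      have : ⟪η, η⟫ = 0 := by rw [hη]; exact h0
      have : η = 0 := inner_self_eq_zero.mp this
      rw [hη, sub_eq_zero] at this
      exact this.symm
    exact hfix x hxg hxh
  have hrange : LinearMap.range f = ⊤ :=
    (Submodule.orthogonal_eq_bot_iff).mp horth
  obtain ⟨⟨ξ, η⟩, hp⟩ : ∃ p : V × V, f p = (Ad (h * g)).symm ζ := by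
    have : (Ad (h * g)).symm ζ ∈ LinearMap.range f := hrange ▸ Submodule.mem_top
    exact this
  refine ⟨ξ, η, ?_⟩
  have hfval : f (ξ, η) = (Ad h⁻¹) ξ - ξ + (η - (Ad g⁻¹) η) := by
    simp [hf, hA, hB, LinearMap.coprod_apply]
  have : Ad h⁻¹ ξ - ξ + η - Ad g⁻¹ η = f (ξ, η) := by rw [hfval]; abel
  rw [this, hp]
  simp
end

section
/- For K = SU(2) and any fixed g ∈ SU(2), the map ψ_g : 𝕋 × SU(2) → SU(2), (λ, h) ↦ [gλ, h] = gλ h λ⁻¹ g⁻¹ h⁻¹, is surjective, where 𝕋 is the diagonal maximal torus. -/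
/-!
Put `x = g λ`. Then `[x, h] = k` as soon as `h x⁻¹ h⁻¹ = x⁻¹ k`, so it suffices to find a torus
element `λ` for which `x⁻¹` and `x⁻¹ k` are conjugate in `SU(2)`. Two elements of `SU(2)` are
conjugate as soon as their traces agree, because `!![a, b; -b̄, ā]` is conjugate to
`diag(t + s i, t - s i)` with `t = re a`, `s = √(1 - t²)`. For `λ = diag(z, z̄)` the two traces
differ by `2 re (z̄ w)`, where `w` depends only on `g` and `k`, and some unit `z` makes `z̄ w`
purely imaginary.
-/

open Complex Matrix ComplexConjugate
open scoped commutatorElement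

local notation "M₂" => Matrix (Fin 2) (Fin 2) ℂ
local notation "U₂" => unitaryGroup (Fin 2) ℂ

noncomputable def su2Mat (a b : ℂ) : M₂ :=
  !![a, b; -conj b, conj a]

lemma su2Mat_mul (a b c d : ℂ) :
    su2Mat a b * su2Mat c d = su2Mat (a * c - b * conj d) (a * d + b * conj c) := by
  rw [su2Mat, su2Mat, su2Mat, mul_fin_two, EmbeddingLike.apply_eq_iff_eq]
  simp only [map_sub, map_add, map_mul, conj_conj, vecCons_inj, and_true]
  refine ⟨?_, ?_, ?_⟩ <;> ring

lemma su2Mat_one_zero : su2Mat 1 0 = 1 := by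
  simp [su2Mat, one_fin_two]

lemma star_su2Mat (a b : ℂ) : star (su2Mat a b) = su2Mat (conj a) (-b) := by
  ext i j; fin_cases i <;> fin_cases j <;> simp [su2Mat]

lemma det_su2Mat (a b : ℂ) : (su2Mat a b).det = (normSq a + normSq b : ℝ) := by
  simp [su2Mat, det_fin_two_of, mul_conj]

lemma trace_su2Mat (a b : ℂ) : (su2Mat a b).trace = (2 * a.re : ℝ) := by
  simp [su2Mat, trace_fin_two_of, add_conj]

lemma ofReal_smul_su2Mat (r : ℝ) (a b : ℂ) :
    (r : ℂ) • su2Mat a b = su2Mat (r * a) (r * b) := by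
  ext i j; fin_cases i <;> fin_cases j <;> simp [su2Mat]

lemma su2Mat_mem_unitaryGroup {a b : ℂ} (hab : normSq a + normSq b = 1) :
    su2Mat a b ∈ U₂ := by
  rw [mem_unitaryGroup_iff, star_su2Mat, su2Mat_mul, ← su2Mat_one_zero]
  congr 1
  · have hab' : a * conj a + b * conj b = 1 := by simp only [mul_conj]; exact_mod_cast hab
    rw [map_neg]
    linear_combination hab'
  · rw [conj_conj]; ring

lemma eq_su2Mat_of_det_eq_one {A : M₂} (hA : A ∈ U₂) (hdet : A.det = 1) :
    A = su2Mat (A 0 0) (A 0 1) := by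
  have hstar : star A = adjugate A := by
    rw [← Matrix.inv_eq_right_inv (mem_unitaryGroup_iff.mp hA), Matrix.inv_def, hdet]; simp
  have h00 := congrFun₂ hstar 0 0
  have h01 := congrFun₂ hstar 1 0
  simp only [star_apply, adjugate_fin_two, of_apply, cons_val', cons_val_zero, cons_val_fin_one,
    cons_val_one, RCLike.star_def] at h00 h01
  ext i j; fin_cases i <;> fin_cases j <;> simp [su2Mat, h00, h01]

lemma exists_unit_su2Mat_mul_eq_mul_of_pos {u v : ℂ} {A B : M₂}
    (hpos : 0 < normSq u + normSq v) (h : su2Mat u v * A = B * su2Mat u v) :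
    ∃ u' v', normSq u' + normSq v' = 1 ∧ su2Mat u' v' * A = B * su2Mat u' v' := by
  set r : ℝ := (√(normSq u + normSq v))⁻¹
  have hr : r ^ 2 * (normSq u + normSq v) = 1 := by
    rw [inv_pow, Real.sq_sqrt hpos.le, inv_mul_cancel₀ hpos.ne']
  refine ⟨r * u, r * v, by simpa [normSq_mul, mul_add, pow_two, mul_assoc] using hr, ?_⟩
  rw [← ofReal_smul_su2Mat, smul_mul_assoc, h, mul_smul_comm]

lemma exists_unit_su2Mat_mul_eq_diag_mul {a b : ℂ} (hab : normSq a + normSq b = 1) :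
    ∃ u v, normSq u + normSq v = 1 ∧
      su2Mat u v * su2Mat a b = su2Mat (a.re + √(1 - a.re ^ 2) * I) 0 * su2Mat u v := by
  set t := a.re
  set c := a.im
  set s := √(1 - t ^ 2)
  have hs : s ^ 2 = c ^ 2 + normSq b := by
    have h1 : 1 - t ^ 2 = c ^ 2 + normSq b := by rw [← hab, normSq_apply a]; ring
    rw [Real.sq_sqrt (h1 ▸ add_nonneg (sq_nonneg c) (normSq_nonneg b)), h1]
  have ha : a = t + c * I := (re_add_im a).symm
  have hbb : b * conj b = s ^ 2 - c ^ 2 := by rw [mul_conj]; exact_mod_cast (by linarith : _)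
  by_cases hsc : s + c = 0
  · -- `a = t - s i` is diagonal with its eigenvalues in the wrong order; `j` swaps them
    have hb : b = 0 := by
      rw [← normSq_eq_zero, (by linear_combination -hs : normSq b = (s + c) * (s - c)), hsc,
        zero_mul]
    have hsc' : (s : ℂ) = -c := by exact_mod_cast (by linarith : s = -c)
    refine ⟨0, 1, by simp, ?_⟩
    rw [su2Mat_mul, su2Mat_mul, hb, ha]
    simp only [zero_mul, map_zero, mul_zero, sub_self, map_add, conj_ofReal, map_mul, conj_I,
      mul_neg, one_mul, zero_add, hsc', neg_mul, map_one, mul_one, add_zero]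
  · -- With `X = c i + b j`, `Y = s i` the imaginary parts of `a + b j` and of the target,
    -- `s² - Y X = s (s + c - I b j)` satisfies `(s² - Y X) X = Y (s² - Y X)`; it vanishes iff `Y = -X`.
    apply exists_unit_su2Mat_mul_eq_mul_of_pos (u := s + c) (v := -I * b)
    · have := normSq_pos.mpr (by exact_mod_cast hsc : ((s + c : ℝ) : ℂ) ≠ 0)
      push_cast at this
      linarith [normSq_nonneg (-I * b)]
    · rw [su2Mat_mul, su2Mat_mul, ha]
      congr 1
      · simp only [neg_mul, sub_neg_eq_add, map_neg, map_mul, conj_I, neg_neg, zero_mul, sub_zero]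
        linear_combination I * hbb
      · simp only [neg_mul, map_add, conj_ofReal, map_mul, conj_I, mul_neg, zero_mul, add_zero]
        linear_combination (↑s + ↑c) * b * I_sq

lemma coe_mul_mul_inv_eq_of_mul_eq {h x : U₂} {D : M₂} (hD : (h : M₂) * x = D * h) :
    ((h * x * h⁻¹ : U₂) : M₂) = D := by
  rw [UnitaryGroup.mul_val, UnitaryGroup.mul_val, UnitaryGroup.inv_val, hD, mul_assoc,
    Unitary.mul_star_self_of_mem h.2, mul_one]

lemma det_coe_inv (x : U₂) : ((x⁻¹ : U₂) : M₂).det = conj (x : M₂).det := by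
  rw [UnitaryGroup.inv_val, star_eq_conjTranspose, det_conjTranspose]; rfl

lemma exists_conj_eq_diag {x : U₂} (hx : (x : M₂).det = 1) :
    ∃ h : U₂, (h : M₂).det = 1 ∧
      ((h * x * h⁻¹ : U₂) : M₂) = su2Mat ((x 0 0).re + √(1 - (x 0 0).re ^ 2) * I) 0 := by
  have hxab := eq_su2Mat_of_det_eq_one x.2 hx
  have hnorm : normSq (x 0 0) + normSq (x 0 1) = 1 := by
    exact_mod_cast (det_su2Mat (x 0 0) (x 0 1)).symm.trans (hxab ▸ hx)
  obtain ⟨u, v, huv, hconj⟩ := exists_unit_su2Mat_mul_eq_diag_mul hnorm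
  refine ⟨⟨su2Mat u v, su2Mat_mem_unitaryGroup huv⟩, ?_, coe_mul_mul_inv_eq_of_mul_eq ?_⟩
  · simp [det_su2Mat, huv]
  · rw [hxab]; exact hconj

theorem exists_conj_eq_of_trace_eq {x y : U₂} (hx : (x : M₂).det = 1) (hy : (y : M₂).det = 1)
    (htr : (x : M₂).trace = (y : M₂).trace) :
    ∃ h : U₂, (h : M₂).det = 1 ∧ h * x * h⁻¹ = y := by
  obtain ⟨hx', hdx, hconjx⟩ := exists_conj_eq_diag hx
  obtain ⟨hy', hdy, hconjy⟩ := exists_conj_eq_diag hy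
  have hre : (x 0 0).re = (y 0 0).re := by
    rw [eq_su2Mat_of_det_eq_one x.2 hx, eq_su2Mat_of_det_eq_one y.2 hy,
      trace_su2Mat, trace_su2Mat] at htr
    exact_mod_cast (mul_right_inj' two_ne_zero).mp (ofReal_injective htr)
  have hxy : hx' * x * hx'⁻¹ = hy' * y * hy'⁻¹ := Subtype.ext (by rw [hconjx, hconjy, hre])
  refine ⟨hy'⁻¹ * hx', by rw [UnitaryGroup.mul_val, det_mul, det_coe_inv, hdx, hdy]; simp, ?_⟩
  calc hy'⁻¹ * hx' * x * (hy'⁻¹ * hx')⁻¹ = hy'⁻¹ * (hx' * x * hx'⁻¹) * hy' := by group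
    _ = y := by rw [hxy]; group

lemma commutatorElement_eq_of_conj_inv {G : Type*} [Group G] {x h k : G}
    (H : h * x⁻¹ * h⁻¹ = x⁻¹ * k) : ⁅x, h⁆ = k :=
  calc ⁅x, h⁆ = x * (h * x⁻¹ * h⁻¹) := by rw [commutatorElement_def]; group
    _ = k := by rw [H]; group

lemma exists_normSq_eq_one_re_conj_mul_eq_zero (w : ℂ) :
    ∃ z : ℂ, normSq z = 1 ∧ (conj z * w).re = 0 := by
  rcases eq_or_ne w 0 with rfl | hw
  · exact ⟨1, by simp, by simp⟩
  · refine ⟨I * w / ‖w‖, by simp [normSq_eq_norm_sq, hw], ?_⟩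
    rw [map_div₀, map_mul, conj_I, conj_ofReal, div_mul_eq_mul_div, mul_assoc, mul_comm (conj w),
      mul_conj]
    simp

/-- For `K = SU(2)` and any fixed `g ∈ SU(2)`, the map
`ψ_g : 𝕋 × SU(2) → SU(2), (λ, h) ↦ [gλ, h] = gλ h (gλ)⁻¹ h⁻¹` is surjective, where `𝕋` is
the diagonal maximal torus.  Here `SU(2)` is realized as the elements of the unitary group
`U(2)` of determinant one. -/
theorem stmt14 (g : Matrix.unitaryGroup (Fin 2) ℂ)
    (hg : (g : Matrix (Fin 2) (Fin 2) ℂ).det = 1) :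
    ∀ k : Matrix.unitaryGroup (Fin 2) ℂ, (k : Matrix (Fin 2) (Fin 2) ℂ).det = 1 →
      ∃ lam h : Matrix.unitaryGroup (Fin 2) ℂ,
        (lam : Matrix (Fin 2) (Fin 2) ℂ).det = 1 ∧
          (h : Matrix (Fin 2) (Fin 2) ℂ).det = 1 ∧
          (lam : Matrix (Fin 2) (Fin 2) ℂ) 0 1 = 0 ∧
          (lam : Matrix (Fin 2) (Fin 2) ℂ) 1 0 = 0 ∧
          (g * lam) * h * (g * lam)⁻¹ * h⁻¹ = k := by
  intro k hk
  obtain ⟨p, q, hgpq⟩ : ∃ p q, (g : M₂) = su2Mat p q := ⟨_, _, eq_su2Mat_of_det_eq_one g.2 hg⟩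
  obtain ⟨c, d, hkcd⟩ : ∃ c d, (k : M₂) = su2Mat c d := ⟨_, _, eq_su2Mat_of_det_eq_one k.2 hk⟩
  obtain ⟨z, hz, hre⟩ :=
    exists_normSq_eq_one_re_conj_mul_eq_zero (conj p * (c - 1) + q * conj d)
  let lam : U₂ := ⟨su2Mat z 0, su2Mat_mem_unitaryGroup (by simpa using hz)⟩
  have hlam : (lam : M₂).det = 1 := by simp [lam, det_su2Mat, hz]
  have hdet : (((g * lam)⁻¹ : U₂) : M₂).det = 1 := by
    rw [det_coe_inv, UnitaryGroup.mul_val, det_mul, hg, hlam]; simp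
  have htr : (((g * lam)⁻¹ : U₂) : M₂).trace = (((g * lam)⁻¹ * k : U₂) : M₂).trace := by
    simp only [UnitaryGroup.mul_val, UnitaryGroup.inv_val, lam, star_su2Mat, hgpq, hkcd,
      su2Mat_mul, trace_su2Mat]
    congr 2
    rw [eq_comm, ← sub_eq_zero, ← sub_re, ← hre]
    congr 1
    simp only [map_zero, mul_zero, sub_zero, map_mul, zero_add, neg_mul, sub_neg_eq_add]
    ring
  obtain ⟨h, hh, hconj⟩ := exists_conj_eq_of_trace_eq hdet
    (by rwa [UnitaryGroup.mul_val, det_mul, hdet, one_mul]) htr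
  exact ⟨lam, h, hlam, hh, by simp [lam, su2Mat], by simp [lam, su2Mat],
    commutatorElement_eq_of_conj_inv hconj⟩
end

section
/- Let K be a compact connected Lie group with maximal torus T. The commutator map ψ : T × K → [K,K], (λ, h) ↦ λ h λ⁻¹ h⁻¹, is surjective onto the commutator subgroup. In particular for K = SU(2) and T the diagonal torus, every element of SU(2) is of the form λ h λ⁻¹ h⁻¹ with λ ∈ T. -/
/-!
Write `k = !![α, -β̄; β, ᾱ]`. Since `λ h λ⁻¹ h⁻¹ = k` is equivalent to `λ h = k h λ`, for
`λ = diag(z, z̄)` and `h = !![p, -q̄; q, p̄]` the equation reduces to two scalar ones: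
`(1 - α) p = -β̄ q` and `z̄ q = (β p + ᾱ q) z`. The first is solved by `(p, q) ∝ (β̄, α - 1)`,
and then the second says that `z̄ (α - 1)` is purely imaginary, so `z = i (α - 1) / |α - 1|`
(if `α = 1` then `k = 1` and there is nothing to do).
-/

open Complex ComplexConjugate Matrix

namespace Matrix

def su2 (a b : ℂ) : Matrix (Fin 2) (Fin 2) ℂ := !![a, -conj b; b, conj a]

theorem su2_mul (a b c d : ℂ) :
    su2 a b * su2 c d = su2 (a * c - conj b * d) (b * c + conj a * d) := by
  ext i j
  fin_cases i <;> fin_cases j <;> simp [su2] <;> ring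

theorem star_su2 (a b : ℂ) : star (su2 a b) = su2 (conj a) (-b) := by
  ext i j
  fin_cases i <;> fin_cases j <;> simp [su2, star_apply]

theorem su2_one_zero : su2 1 0 = 1 := by
  rw [su2, one_fin_two]
  simp

theorem det_su2 (a b : ℂ) : (su2 a b).det = (‖a‖ ^ 2 + ‖b‖ ^ 2 : ℝ) := by
  rw [su2, det_fin_two_of]
  push_cast
  rw [← mul_conj', ← mul_conj']
  ring

theorem su2_mem_specialUnitaryGroup_iff {a b : ℂ} :
    su2 a b ∈ specialUnitaryGroup (Fin 2) ℂ ↔ ‖a‖ ^ 2 + ‖b‖ ^ 2 = 1 := by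
  refine ⟨fun hab ↦ ?_, fun h ↦ ?_⟩
  · have hdet := (mem_specialUnitaryGroup_iff.mp hab).2
    rw [det_su2] at hdet
    exact_mod_cast hdet
  have h' : conj a * a + conj b * b = 1 := by
    rw [conj_mul', conj_mul']
    exact_mod_cast h
  refine mem_specialUnitaryGroup_iff.mpr ⟨mem_unitaryGroup_iff'.mpr ?_, ?_⟩
  · rw [star_su2, su2_mul, ← su2_one_zero]
    congr 1
    · simpa using h'
    · simp only [conj_conj]
      ring
  · rw [det_su2, h, ofReal_one]

theorem eq_su2_of_mem_specialUnitaryGroup {k : Matrix (Fin 2) (Fin 2) ℂ}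
    (hk : k ∈ specialUnitaryGroup (Fin 2) ℂ) : k = su2 (k 0 0) (k 1 0) := by
  obtain ⟨hu, hdet⟩ := mem_specialUnitaryGroup_iff.mp hk
  have hadj : star k = k.adjugate :=
    calc star k = star k * (k * k.adjugate) := by rw [mul_adjugate, hdet, one_smul, mul_one]
      _ = k.adjugate := by rw [← mul_assoc, mem_unitaryGroup_iff'.mp hu, one_mul]
  have h00 := congrFun (congrFun hadj 0) 0
  have h01 := congrFun (congrFun hadj 0) 1
  simp only [adjugate_fin_two, star_apply, of_apply, cons_val', cons_val_zero, cons_val_one,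
    empty_val', cons_val_fin_one, Complex.star_def] at h00 h01
  ext i j
  fin_cases i <;> fin_cases j <;> simp [su2]
  · rw [h01, neg_neg]
  · exact h00.symm

theorem exists_su2_diag_mul_eq {α β : ℂ} (h : ‖α‖ ^ 2 + ‖β‖ ^ 2 = 1) :
    ∃ z p q : ℂ, ‖z‖ = 1 ∧ ‖p‖ ^ 2 + ‖q‖ ^ 2 = 1 ∧
      su2 z 0 * su2 p q = su2 α β * su2 p q * su2 z 0 := by
  by_cases hα : α = 1
  · have hβ : β = 0 := by simpa [hα] using h
    exact ⟨1, 1, 0, by simp, by simp, by simp [hα, hβ, su2_one_zero]⟩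
  have hc : α * conj α + β * conj β = 1 := by
    rw [mul_conj', mul_conj']
    exact_mod_cast h
  set r := ‖α - 1‖
  set s := √(‖β‖ ^ 2 + r ^ 2)
  have hr : 0 < r := norm_pos_iff.mpr (sub_ne_zero.mpr hα)
  have hs : 0 < s := Real.sqrt_pos.mpr (by positivity)
  refine ⟨I * (α - 1) / r, conj β / s, (α - 1) / s, ?_, ?_, ?_⟩
  · simp [r, hr.ne']
  · rw [norm_div, norm_div, norm_conj, norm_real, Real.norm_of_nonneg hs.le, div_pow, div_pow,
      ← add_div, Real.sq_sqrt (by positivity), div_self (by positivity)]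
  · simp only [su2_mul, map_div₀, map_mul, map_sub, conj_I, conj_ofReal, map_one, map_zero]
    congr 1
    · ring
    · linear_combination (-I * (α - 1) / (r * s)) * hc

end Matrix

/-- Surjectivity of the commutator map `ψ : T × K → [K,K]` for a maximal torus `T`, in the
case `K = SU(2)` with `T` the diagonal torus: every `k ∈ SU(2)` equals `λ h λ⁻¹ h⁻¹` with
`λ` diagonal.  Here `SU(2)` is realized as the elements of the unitary group `U(2)` of
determinant one. -/
theorem stmt15 :
    ∀ k : Matrix.unitaryGroup (Fin 2) ℂ, (k : Matrix (Fin 2) (Fin 2) ℂ).det = 1 →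
      ∃ lam h : Matrix.unitaryGroup (Fin 2) ℂ,
        (lam : Matrix (Fin 2) (Fin 2) ℂ).det = 1 ∧
          (h : Matrix (Fin 2) (Fin 2) ℂ).det = 1 ∧
          (lam : Matrix (Fin 2) (Fin 2) ℂ) 0 1 = 0 ∧
          (lam : Matrix (Fin 2) (Fin 2) ℂ) 1 0 = 0 ∧
          lam * h * lam⁻¹ * h⁻¹ = k := by
  intro k hdet
  have hk : (k : Matrix (Fin 2) (Fin 2) ℂ) ∈ specialUnitaryGroup (Fin 2) ℂ :=
    mem_specialUnitaryGroup_iff.mpr ⟨k.2, hdet⟩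
  have hk_eq := eq_su2_of_mem_specialUnitaryGroup hk
  obtain ⟨z, p, q, hz, hpq, hcomm⟩ :=
    exists_su2_diag_mul_eq (su2_mem_specialUnitaryGroup_iff.mp (hk_eq ▸ hk))
  obtain ⟨hlam, hlam_det⟩ := mem_specialUnitaryGroup_iff.mp
    (su2_mem_specialUnitaryGroup_iff.mpr (by simp [hz]) : su2 z 0 ∈ _)
  obtain ⟨hh, hh_det⟩ := mem_specialUnitaryGroup_iff.mp (su2_mem_specialUnitaryGroup_iff.mpr hpq)
  refine ⟨⟨su2 z 0, hlam⟩, ⟨su2 p q, hh⟩, hlam_det, hh_det, by simp [su2], by simp [su2], ?_⟩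
  rw [← hk_eq] at hcomm
  have hcomm' : (⟨su2 z 0, hlam⟩ : unitaryGroup (Fin 2) ℂ) * ⟨su2 p q, hh⟩ =
      k * ⟨su2 p q, hh⟩ * ⟨su2 z 0, hlam⟩ := Subtype.ext hcomm
  rw [hcomm']
  group
end

section
/- Let K be a compact Lie group with Lie algebra 𝔨 and maximal torus T with Lie algebra 𝔱. For (λ, h) ∈ T × K with λ regular (i.e. 𝔨^λ = 𝔱) and 𝔨^h ∩ 𝔱 = {0}, the subspaces (1 − Ad_{h⁻¹})𝔱 and 𝔱^⊥ intersect trivially; hence their sum has dimension dim 𝔨. -/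
/-!
For a linear isometry `g`, `‖x - g x‖² = 2 ⟪x, x - g x⟫`. So if `x ∈ 𝔱` and `x - g x ⊥ 𝔱`, then `x`
is fixed by `g`; for `g = Ad_{h⁻¹}`, which has the same fixed vectors as `Ad_h`, this forces
`x = 0`. The same fact makes `1 - g` injective on `𝔱`, so `(1 - g)𝔱` has dimension `dim 𝔱` and
is complementary to `𝔱ᗮ`.
-/

section

open LinearMap Submodule Module

theorem LinearMap.finrank_map_eq_of_ker_inf_eq_bot {K M N : Type*} [DivisionRing K]
    [AddCommGroup M] [Module K M] [AddCommGroup N] [Module K N] (f : M →ₗ[K] N)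
    (p : Submodule K M) [FiniteDimensional K p] (hp : ker f ⊓ p = ⊥) :
    finrank K (p.map f) = finrank K p := by
  rw [← range_domRestrict]
  refine finrank_range_of_inj (ker_eq_bot.mp ?_)
  rw [ker_domRestrict, ← disjoint_iff_comap_eq_bot, disjoint_iff, inf_comm, hp]

theorem LinearEquiv.ker_id_sub_symm {R M : Type*} [Ring R] [AddCommGroup M] [Module R M]
    (e : M ≃ₗ[R] M) :
    ker (LinearMap.id - (e.symm : M →ₗ[R] M)) = ker ((e : M →ₗ[R] M) - LinearMap.id) := by
  ext x
  simp only [mem_ker, LinearMap.sub_apply, LinearMap.id_apply, LinearEquiv.coe_coe, sub_eq_zero]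
  exact e.eq_symm_apply

variable {V : Type*} [NormedAddCommGroup V] [InnerProductSpace ℝ V]

theorem LinearIsometry.norm_self_sub_apply_sq (g : V →ₗᵢ[ℝ] V) (x : V) :
    ‖x - g x‖ ^ 2 = 2 * inner ℝ x (x - g x) := by
  rw [norm_sub_sq_real, g.norm_map, inner_sub_right, real_inner_self_eq_norm_sq]
  ring

theorem LinearIsometry.map_id_sub_inf_orthogonal_eq_bot (g : V →ₗᵢ[ℝ] V) {W : Submodule ℝ V}
    (hW : ker (LinearMap.id - g.toLinearMap) ⊓ W = ⊥) :
    W.map (LinearMap.id - g.toLinearMap) ⊓ Wᗮ = ⊥ := by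
  rw [eq_bot_iff]
  rintro _ ⟨⟨x, hx, rfl⟩, hperp⟩
  have hfixed : x - g x = 0 := by
    have hinner : inner ℝ x (x - g x) = 0 := (mem_orthogonal W _).mp hperp x hx
    have := g.norm_self_sub_apply_sq x
    rw [hinner, mul_zero] at this
    simpa using this
  have : x ∈ ker (LinearMap.id - g.toLinearMap) ⊓ W := ⟨hfixed, hx⟩
  rw [hW, mem_bot] at this
  simp [this]

theorem Submodule.finrank_map_sup_orthogonal [FiniteDimensional ℝ V] (f : V →ₗ[ℝ] V)
    {W : Submodule ℝ V} (hker : ker f ⊓ W = ⊥) (horth : W.map f ⊓ Wᗮ = ⊥) :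
    finrank ℝ ↥(W.map f ⊔ Wᗮ) = finrank ℝ V := by
  have := Submodule.finrank_sup_add_finrank_inf_eq (W.map f) Wᗮ
  rw [horth, finrank_bot, add_zero, f.finrank_map_eq_of_ker_inf_eq_bot W hker] at this
  rw [this, W.finrank_add_finrank_orthogonal]

end

theorem stmt16_general {K V : Type*} [Group K] [NormedAddCommGroup V] [InnerProductSpace ℝ V]
    [FiniteDimensional ℝ V] (Ad : K →* (V ≃ₗᵢ[ℝ] V)) (h : K) (𝔱 : Submodule ℝ V)
    (hfix : LinearMap.ker (((Ad h).toLinearEquiv : V →ₗ[ℝ] V) - LinearMap.id) ⊓ 𝔱 = ⊥) :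
    Submodule.map (LinearMap.id - ((Ad h⁻¹).toLinearEquiv : V →ₗ[ℝ] V)) 𝔱 ⊓ 𝔱ᗮ = ⊥ ∧
      Module.finrank ℝ
          ↥(Submodule.map (LinearMap.id - ((Ad h⁻¹).toLinearEquiv : V →ₗ[ℝ] V)) 𝔱 ⊔ 𝔱ᗮ) =
        Module.finrank ℝ V := by
  have hker : LinearMap.ker (LinearMap.id - ((Ad h⁻¹).toLinearEquiv : V →ₗ[ℝ] V)) ⊓ 𝔱 = ⊥ := by
    rw [map_inv, LinearIsometryEquiv.inv_def, LinearIsometryEquiv.toLinearEquiv_symm,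
      LinearEquiv.ker_id_sub_symm, hfix]
  have horth := (Ad h⁻¹).toLinearIsometry.map_id_sub_inf_orthogonal_eq_bot hker
  exact ⟨horth, Submodule.finrank_map_sup_orthogonal _ hker horth⟩

/-- If `λ ∈ T` is regular (`𝔨^λ = 𝔱`) and `𝔨^h ∩ 𝔱 = 0`, then `(1 - Ad_{h⁻¹})𝔱` and `𝔱ᗮ`
intersect trivially, hence their sum has dimension `dim 𝔨`. -/
theorem stmt16 {K V : Type*} [Group K] [NormedAddCommGroup V] [InnerProductSpace ℝ V]
    [FiniteDimensional ℝ V] (Ad : K →* (V ≃ₗᵢ[ℝ] V)) (lam h : K) (𝔱 : Submodule ℝ V)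
    (hreg : LinearMap.ker (((Ad lam).toLinearEquiv : V →ₗ[ℝ] V) - LinearMap.id) = 𝔱)
    (hfix : LinearMap.ker (((Ad h).toLinearEquiv : V →ₗ[ℝ] V) - LinearMap.id) ⊓ 𝔱 = ⊥) :
    Submodule.map (LinearMap.id - ((Ad h⁻¹).toLinearEquiv : V →ₗ[ℝ] V)) 𝔱 ⊓ 𝔱ᗮ = ⊥ ∧
      Module.finrank ℝ
          ↥(Submodule.map (LinearMap.id - ((Ad h⁻¹).toLinearEquiv : V →ₗ[ℝ] V)) 𝔱 ⊔ 𝔱ᗮ) =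
        Module.finrank ℝ V :=
  stmt16_general Ad h 𝔱 hfix
end
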